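/- Let X, Y, W, C, D be random variables taking values in finite sets. If H(D | (C, X)) = 0 or H(D | (C, Y)) = 0 (i.e., D is almost surely a function of (C,X), or of (C,Y)), then I(X; Y | (C, D, W)) ≤ I(X; Y | (C, W)). (Informally: appending a public message computed by either party from its own data and the past transcript cannot increase the conditional mutual information between the two parties' data.) -/

import Mathlib

/-! Write `S = (C, W)`. If `D` is a function of `(X, S)`, adding `D` to the conditioning leaves
`H(X, S)` and `H(X, Y, S)` unchanged, so `I(X;Y|S) - I(X;Y|D,S) = I(Y;D|S) ≥ 0`; the case where
`D` is a function of `(C, Y)` is symmetric. Nonnegativity of conditional mutual information is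
Gibbs' inequality: `I(X;Y|Z)` is the `μ`-average of `-log r` for the ratio
`r = p(x,z) p(y,z) / (p(x,y,z) p(z))`, `log r ≤ r - 1`, and the `μ`-average of `r` is at most `1`. -/

open scoped BigOperators Classical

noncomputable section

namespace OT

variable {Ω : Type*} [Fintype Ω]

/-- Probability of an event under a pmf on a finite sample space. -/
def pr (μ : Ω → ℝ) (s : Set Ω) : ℝ := ∑ ω, s.indicator μ ω

/-- `q` is a probability mass function on a finite type. -/
def isDist {α : Type*} [Fintype α] (q : α → ℝ) : Prop := (∀ a, 0 ≤ q a) ∧ ∑ a, q a = 1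

/-- Distribution (pmf) of a random variable. -/
def dst {α : Type*} (μ : Ω → ℝ) (X : Ω → α) : α → ℝ := fun a => pr μ {ω | X ω = a}

/-- Joint distribution of two random variables. -/
def jd {α β : Type*} (μ : Ω → ℝ) (X : Ω → α) (Y : Ω → β) : α × β → ℝ :=
  fun q => pr μ {ω | X ω = q.1 ∧ Y ω = q.2}

/-- Conditional pmf given an event. -/
def cnd (μ : Ω → ℝ) (s : Set Ω) : Ω → ℝ := fun ω => s.indicator μ ω / pr μ s

/-- Shannon entropy (in bits) of a pmf on a finite type. -/
def entD {α : Type*} [Fintype α] (q : α → ℝ) : ℝ := ∑ a, -(q a * Real.logb 2 (q a))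

/-- Shannon entropy (in bits) of a random variable. -/
def ent {α : Type*} [Fintype α] (μ : Ω → ℝ) (X : Ω → α) : ℝ := entD (dst μ X)

/-- Conditional Shannon entropy `H(X|Y)` (in bits). -/
def condEnt {α β : Type*} [Fintype α] [Fintype β] (μ : Ω → ℝ) (X : Ω → α) (Y : Ω → β) : ℝ :=
  ent μ (fun ω => (X ω, Y ω)) - ent μ Y

/-- Mutual information `I(X;Y)` (in bits). -/
def mi {α β : Type*} [Fintype α] [Fintype β] (μ : Ω → ℝ) (X : Ω → α) (Y : Ω → β) : ℝ :=
  ent μ X + ent μ Y - ent μ (fun ω => (X ω, Y ω))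

/-- Conditional mutual information `I(X;Y|Z)` (in bits). -/
def cmi {α β γ : Type*} [Fintype α] [Fintype β] [Fintype γ]
    (μ : Ω → ℝ) (X : Ω → α) (Y : Ω → β) (Z : Ω → γ) : ℝ :=
  ent μ (fun ω => (X ω, Z ω)) + ent μ (fun ω => (Y ω, Z ω))
    - ent μ (fun ω => (X ω, Y ω, Z ω)) - ent μ Z

/-- Rényi entropy of order two (in bits). -/
def ren2 {α : Type*} [Fintype α] (μ : Ω → ℝ) (X : Ω → α) : ℝ :=
  Real.logb 2 (1 / ∑ a, (dst μ X a) ^ 2)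

/-- Statistical (total variation) distance between two pmfs. -/
def sd {α : Type*} [Fintype α] (q q' : α → ℝ) : ℝ := (∑ a, |q a - q' a|) / 2

/-- Conditional min-entropy `H∞(X|Y)` of a joint pmf (in bits):
the minimum over `(a,b)` in the support of `log₂ (P(Y=b) / P(X=a, Y=b))`. -/
def minEnt {α β : Type*} [Fintype α] [Fintype β] (q : α × β → ℝ) : ℝ :=
  sInf {r | ∃ a b, 0 < q (a, b) ∧ r = Real.logb 2 ((∑ a', q (a', b)) / q (a, b))}

/-- `ε`-smooth conditional min-entropy of a joint pmf (in bits). -/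
def sminEnt {α β : Type*} [Fintype α] [Fintype β] (q : α × β → ℝ) (ε : ℝ) : ℝ :=
  sSup {r | ∃ q' : α × β → ℝ, isDist q' ∧ sd q q' ≤ ε ∧ r = minEnt q'}

/-- Conditional zero-entropy `H₀(X|Y)` of a joint pmf (in bits). -/
def zeroEnt {α β : Type*} [Fintype α] [Fintype β] (q : α × β → ℝ) : ℝ :=
  sSup {r | ∃ b, 0 < ∑ a, q (a, b) ∧
    r = Real.logb 2 ((Finset.univ.filter fun a => 0 < q (a, b)).card)}

end OT

open OT

namespace OT

variable {Ω α β γ δ ε : Type*} [Fintype Ω]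

lemma sum_mul_comp_eq_sum_dst_mul [Fintype α] (μ : Ω → ℝ) (U : Ω → α) (F : α → ℝ) :
    ∑ ω, μ ω * F (U ω) = ∑ a, dst μ U a * F a := by
  simp only [dst, pr, Set.indicator_apply, Set.mem_ofPred_eq, Finset.sum_mul, ite_mul, zero_mul]
  rw [Finset.sum_comm]
  simp

lemma sum_dst [Fintype α] (μ : Ω → ℝ) (U : Ω → α) : ∑ a, dst μ U a = ∑ ω, μ ω := by
  simpa using (sum_mul_comp_eq_sum_dst_mul μ U fun _ => 1).symm

lemma sum_dst_pair_left [Fintype α] (μ : Ω → ℝ) (U : Ω → α) (V : Ω → β) (b : β) :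
    ∑ a, dst μ (fun ω => (U ω, V ω)) (a, b) = dst μ V b := by
  simp only [dst, pr, Set.indicator_apply, Set.mem_ofPred_eq, Prod.mk.injEq]
  rw [Finset.sum_comm]
  refine Finset.sum_congr rfl fun ω _ => ?_
  by_cases h : V ω = b <;> simp [h]

lemma dst_nonneg {μ : Ω → ℝ} (hμ : ∀ ω, 0 ≤ μ ω) (U : Ω → α) (a : α) : 0 ≤ dst μ U a :=
  Finset.sum_nonneg fun _ _ => Set.indicator_nonneg (fun ω _ => hμ ω) _

lemma le_dst_apply {μ : Ω → ℝ} (hμ : ∀ ω, 0 ≤ μ ω) (U : Ω → α) (ω : Ω) :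
    μ ω ≤ dst μ U (U ω) :=
  calc μ ω = {ω' | U ω' = U ω}.indicator μ ω := by simp
    _ ≤ dst μ U (U ω) :=
      Finset.single_le_sum (fun ω' _ => Set.indicator_nonneg (fun ω' _ => hμ ω') ω')
        (Finset.mem_univ ω)

lemma dst_apply_eq_of_fibers_eq (μ : Ω → ℝ) {U : Ω → α} {V : Ω → β}
    (h : ∀ ω ω', U ω' = U ω ↔ V ω' = V ω) (ω : Ω) :
    dst μ U (U ω) = dst μ V (V ω) := by
  simp only [dst, h ω]

lemma ent_eq_neg_sum [Fintype α] (μ : Ω → ℝ) (U : Ω → α) :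
    ent μ U = -∑ ω, μ ω * Real.logb 2 (dst μ U (U ω)) := by
  rw [sum_mul_comp_eq_sum_dst_mul μ U fun a => Real.logb 2 (dst μ U a), ent, entD,
    ← Finset.sum_neg_distrib]

lemma ent_eq_of_fibers_eq [Fintype α] [Fintype β] (μ : Ω → ℝ) {U : Ω → α} {V : Ω → β}
    (h : ∀ ω ω', U ω' = U ω ↔ V ω' = V ω) : ent μ U = ent μ V := by
  simp only [ent_eq_neg_sum, dst_apply_eq_of_fibers_eq μ h]

lemma sum_mul_ratio_le [Fintype α] [Fintype β] [Fintype γ] {μ : Ω → ℝ} (hμ : ∀ ω, 0 ≤ μ ω)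
    (X : Ω → α) (Y : Ω → β) (Z : Ω → γ) :
    ∑ ω, μ ω * (dst μ (fun ω => (X ω, Z ω)) (X ω, Z ω) * dst μ (fun ω => (Y ω, Z ω)) (Y ω, Z ω)
      / (dst μ (fun ω => (X ω, Y ω, Z ω)) (X ω, Y ω, Z ω) * dst μ Z (Z ω))) ≤ ∑ ω, μ ω := by
  set p := dst μ (fun ω => (X ω, Y ω, Z ω))
  set pXZ := dst μ (fun ω => (X ω, Z ω))
  set pYZ := dst μ (fun ω => (Y ω, Z ω))
  set pZ := dst μ Z
  refine (sum_mul_comp_eq_sum_dst_mul μ (fun ω => (X ω, Y ω, Z ω))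
    fun t => pXZ (t.1, t.2.2) * pYZ (t.2.1, t.2.2) / (p t * pZ t.2.2)).trans_le ?_
  calc ∑ t, p t * (pXZ (t.1, t.2.2) * pYZ (t.2.1, t.2.2) / (p t * pZ t.2.2))
      ≤ ∑ t : α × β × γ, pXZ (t.1, t.2.2) * (pYZ (t.2.1, t.2.2) / pZ t.2.2) := by
        refine Finset.sum_le_sum fun t _ => ?_
        rw [← mul_div_assoc, ← mul_div_assoc]
        exact mul_div_mul_left_le (div_nonneg
          (mul_nonneg (dst_nonneg hμ _ _) (dst_nonneg hμ _ _)) (dst_nonneg hμ _ _))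
    _ = ∑ a, ∑ c, pXZ (a, c) * ((∑ b, pYZ (b, c)) / pZ c) := by
        simp only [Fintype.sum_prod_type]
        refine Finset.sum_congr rfl fun a _ => ?_
        rw [Finset.sum_comm]
        simp only [Finset.sum_div, Finset.mul_sum]
    _ ≤ ∑ a, ∑ c, pXZ (a, c) := by
        simp only [pYZ, sum_dst_pair_left]
        gcongr with a _ c _
        exact mul_le_of_le_one_right (dst_nonneg hμ _ _) (div_self_le_one _)
    _ = ∑ ω, μ ω := by
        rw [← Fintype.sum_prod_type', sum_dst]

lemma logb_two_le_sub_one_div {x : ℝ} (hx : 0 < x) : Real.logb 2 x ≤ (x - 1) / Real.log 2 :=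
  div_le_div_of_nonneg_right (Real.log_le_sub_one_of_pos hx) (Real.log_pos one_lt_two).le

lemma cmi_nonneg [Fintype α] [Fintype β] [Fintype γ] {μ : Ω → ℝ} (hμ : ∀ ω, 0 ≤ μ ω)
    (X : Ω → α) (Y : Ω → β) (Z : Ω → γ) : 0 ≤ cmi μ X Y Z := by
  set p := dst μ (fun ω => (X ω, Y ω, Z ω))
  set pXZ := dst μ (fun ω => (X ω, Z ω))
  set pYZ := dst μ (fun ω => (Y ω, Z ω))
  set pZ := dst μ Z
  have hterm : ∀ ω, μ ω * (Real.logb 2 (pXZ (X ω, Z ω)) + Real.logb 2 (pYZ (Y ω, Z ω))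
        - Real.logb 2 (p (X ω, Y ω, Z ω)) - Real.logb 2 (pZ (Z ω)))
      ≤ μ ω * (pXZ (X ω, Z ω) * pYZ (Y ω, Z ω) / (p (X ω, Y ω, Z ω) * pZ (Z ω))) / Real.log 2
        - μ ω / Real.log 2 := by
    intro ω
    rcases (hμ ω).eq_or_lt with h0 | h0
    · simp [← h0]
    have hXZ := h0.trans_le (le_dst_apply hμ (fun ω => (X ω, Z ω)) ω)
    have hYZ := h0.trans_le (le_dst_apply hμ (fun ω => (Y ω, Z ω)) ω)
    have hXYZ := h0.trans_le (le_dst_apply hμ (fun ω => (X ω, Y ω, Z ω)) ω)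
    have hZ := h0.trans_le (le_dst_apply hμ Z ω)
    rw [sub_sub, ← Real.logb_mul hXZ.ne' hYZ.ne', ← Real.logb_mul hXYZ.ne' hZ.ne',
      ← Real.logb_div (by positivity) (by positivity)]
    calc _ ≤ μ ω * ((pXZ (X ω, Z ω) * pYZ (Y ω, Z ω) / (p (X ω, Y ω, Z ω) * pZ (Z ω)) - 1)
          / Real.log 2) := mul_le_mul_of_nonneg_left (logb_two_le_sub_one_div (by positivity)) h0.le
      _ = _ := by ring
  have hsum := Finset.sum_le_sum fun ω (_ : ω ∈ Finset.univ) => hterm ω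
  simp only [mul_add, mul_sub, Finset.sum_add_distrib, Finset.sum_sub_distrib,
    ← Finset.sum_div] at hsum
  have hratio := div_le_div_of_nonneg_right (sum_mul_ratio_le hμ X Y Z)
    (Real.log_pos one_lt_two).le
  simp only [cmi, ent_eq_neg_sum]
  linarith

lemma cmi_comm [Fintype α] [Fintype β] [Fintype γ] (μ : Ω → ℝ)
    (X : Ω → α) (Y : Ω → β) (Z : Ω → γ) : cmi μ X Y Z = cmi μ Y X Z := by
  have hXYZ : ent μ (fun ω => (X ω, Y ω, Z ω)) = ent μ (fun ω => (Y ω, X ω, Z ω)) :=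
    ent_eq_of_fibers_eq μ fun _ _ => by simp only [Prod.mk.injEq]; tauto
  simp only [cmi, hXYZ]
  ring

lemma cmi_congr_right [Fintype α] [Fintype β] [Fintype γ] [Fintype δ] (μ : Ω → ℝ)
    (X : Ω → α) (Y : Ω → β) {Z : Ω → γ} {Z' : Ω → δ}
    (h : ∀ ω ω', Z ω' = Z ω ↔ Z' ω' = Z' ω) : cmi μ X Y Z = cmi μ X Y Z' := by
  simp only [cmi, ent_eq_of_fibers_eq μ h,
    ent_eq_of_fibers_eq μ (U := fun ω => (X ω, Z ω)) (V := fun ω => (X ω, Z' ω))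
      fun _ _ => by simp only [Prod.mk.injEq, h],
    ent_eq_of_fibers_eq μ (U := fun ω => (Y ω, Z ω)) (V := fun ω => (Y ω, Z' ω))
      fun _ _ => by simp only [Prod.mk.injEq, h],
    ent_eq_of_fibers_eq μ (U := fun ω => (X ω, Y ω, Z ω)) (V := fun ω => (X ω, Y ω, Z' ω))
      fun _ _ => by simp only [Prod.mk.injEq, h]]

lemma condEnt_eq_cmi_self [Fintype α] [Fintype β] (μ : Ω → ℝ) (D : Ω → α) (U : Ω → β) :
    condEnt μ D U = cmi μ D D U := by
  have hDDU : ent μ (fun ω => (D ω, D ω, U ω)) = ent μ (fun ω => (D ω, U ω)) :=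
    ent_eq_of_fibers_eq μ fun _ _ => by simp only [Prod.mk.injEq]; tauto
  simp only [condEnt, cmi, hDDU]
  ring

lemma condEnt_nonneg [Fintype α] [Fintype β] {μ : Ω → ℝ} (hμ : ∀ ω, 0 ≤ μ ω)
    (D : Ω → α) (U : Ω → β) : 0 ≤ condEnt μ D U :=
  condEnt_eq_cmi_self μ D U ▸ cmi_nonneg hμ D D U

lemma condEnt_le_condEnt_comp [Fintype α] [Fintype β] [Fintype γ] {μ : Ω → ℝ}
    (hμ : ∀ ω, 0 ≤ μ ω) (D : Ω → α) (U : Ω → β) (g : β → γ) :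
    condEnt μ D U ≤ condEnt μ D fun ω => g (U ω) := by
  have h := cmi_nonneg hμ D U fun ω => g (U ω)
  have hDU : ent μ (fun ω => (D ω, U ω, g (U ω))) = ent μ (fun ω => (D ω, U ω)) :=
    ent_eq_of_fibers_eq μ fun _ _ => by
      simp only [Prod.mk.injEq]
      exact ⟨fun h => ⟨h.1, h.2.1⟩, fun h => ⟨h.1, h.2, by rw [h.2]⟩⟩
  have hU : ent μ (fun ω => (U ω, g (U ω))) = ent μ U :=
    ent_eq_of_fibers_eq μ fun _ _ => by
      simp only [Prod.mk.injEq]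
      exact ⟨And.left, fun h => ⟨h, by rw [h]⟩⟩
  simp only [cmi, condEnt, hDU, hU] at h ⊢
  linarith

lemma condEnt_eq_zero_of_comp [Fintype α] [Fintype β] [Fintype γ] {μ : Ω → ℝ}
    (hμ : ∀ ω, 0 ≤ μ ω) {D : Ω → α} {U : Ω → β} (g : β → γ)
    (h : condEnt μ D (fun ω => g (U ω)) = 0) : condEnt μ D U = 0 :=
  le_antisymm (h ▸ condEnt_le_condEnt_comp hμ D U g) (condEnt_nonneg hμ D U)

lemma cmi_pair_le_of_condEnt_eq_zero [Fintype α] [Fintype β] [Fintype γ] [Fintype δ]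
    {μ : Ω → ℝ} (hμ : ∀ ω, 0 ≤ μ ω) (X : Ω → α) (Y : Ω → β) (S : Ω → γ) {D : Ω → δ}
    (hD : condEnt μ D (fun ω => (X ω, S ω)) = 0) :
    cmi μ X Y (fun ω => (D ω, S ω)) ≤ cmi μ X Y S := by
  have hDXYS : condEnt μ D (fun ω => (X ω, Y ω, S ω)) = 0 :=
    condEnt_eq_zero_of_comp hμ (fun t => (t.1, t.2.2)) hD
  have hXDS : ent μ (fun ω => (X ω, D ω, S ω)) = ent μ (fun ω => (D ω, X ω, S ω)) :=
    ent_eq_of_fibers_eq μ fun _ _ => by simp only [Prod.mk.injEq]; tauto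
  have hXYDS : ent μ (fun ω => (X ω, Y ω, D ω, S ω)) = ent μ (fun ω => (D ω, X ω, Y ω, S ω)) :=
    ent_eq_of_fibers_eq μ fun _ _ => by simp only [Prod.mk.injEq]; tauto
  have hYDS := cmi_nonneg hμ Y D S
  simp only [condEnt] at hD hDXYS
  simp only [cmi] at hYDS ⊢
  linarith

lemma cmi_insert_le_of_condEnt_eq_zero [Fintype α] [Fintype β] [Fintype γ] [Fintype δ]
    [Fintype ε] {μ : Ω → ℝ} (hμ : ∀ ω, 0 ≤ μ ω) (X : Ω → α) (Y : Ω → β) (W : Ω → γ)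
    {C : Ω → δ} {D : Ω → ε} (hD : condEnt μ D (fun ω => (C ω, X ω)) = 0) :
    cmi μ X Y (fun ω => (C ω, D ω, W ω)) ≤ cmi μ X Y (fun ω => (C ω, W ω)) := by
  rw [cmi_congr_right μ X Y (Z' := fun ω => (D ω, C ω, W ω))
    fun _ _ => by simp only [Prod.mk.injEq]; tauto]
  exact cmi_pair_le_of_condEnt_eq_zero hμ X Y _
    (condEnt_eq_zero_of_comp hμ (fun t => (t.2.1, t.1)) hD)

end OT

/-- if `D` is a.s. a function of `(C,X)` or of `(C,Y)`, then
`I(X;Y|(C,D,W)) ≤ I(X;Y|(C,W))`: appending a public message computed by either party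
cannot increase the conditional mutual information between the parties' data. -/
theorem statement8 {Ω A B C D E : Type*} [Fintype Ω] [Fintype A] [Fintype B] [Fintype C]
    [Fintype D] [Fintype E]
    (μ : Ω → ℝ) (hμ : isDist μ)
    (X : Ω → A) (Y : Ω → B) (W : Ω → C) (Cc : Ω → D) (Dd : Ω → E)
    (h : condEnt μ Dd (fun ω => (Cc ω, X ω)) = 0 ∨ condEnt μ Dd (fun ω => (Cc ω, Y ω)) = 0) :
    cmi μ X Y (fun ω => (Cc ω, Dd ω, W ω)) ≤ cmi μ X Y (fun ω => (Cc ω, W ω)) := by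
  rcases h with hX | hY
  · exact cmi_insert_le_of_condEnt_eq_zero hμ.1 X Y W hX
  · rw [cmi_comm, cmi_comm μ X]
    exact cmi_insert_le_of_condEnt_eq_zero hμ.1 Y X W hY
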